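/- Let d ≥ 2 and let k ≥ 3 be an integer. For each pair 1 ≤ i < j ≤ d let ψ_{ij} ∈ L²(S^d) with respect to the surface measure on S^d ⊂ ℝ^{d+1}. Write θ = (w,b) ∈ ℝ^d × ℝ for points of S^d, x̃ = (x,1), and define for each θ the vector field Φ_{θ,ij}(x) = k·σ_{k−1}(θ·x̃)·(w_j e_i − w_i e_j). Then the vector field u(x) = ∫_{S^d} Σ_{1≤i<j≤d} Φ_{θ,ij}(x) ψ_{ij}(θ) dθ is continuously differentiable on ℝ^d and divergence-free: Σ_{p=1}^d ∂_p u_p(x) = 0 for every x ∈ ℝ^d. -/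

import Mathlib

open MeasureTheory RealInnerProductSpace Finset

/-!
Interchanging the finite sums, `u(x) = ∫ g(⟨w, x⟩ + b) • c(θ) dθ` with `g = k σ_{k-1}` and
`c(θ) = ∑_{i<j} ψ_{ij}(θ) (w_j e_i - w_i e_j)`. Since `k - 1 ≥ 2`, `g` is `C¹`; on the sphere
`w` and `b` are bounded and `c` is integrable (`L² ⊆ L¹` for a finite measure), so one may
differentiate under the integral: `Du(x) = ∫ g'(⟨w, x⟩ + b) • (w ⊗ c)`, whose trace is
`∫ g'(⟨w, x⟩ + b) ⟨w, c⟩ = 0` because each `w_j e_i - w_i e_j` is orthogonal to `w`.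
-/

lemma hasDerivAt_max_zero_pow {n : ℕ} (hn : 2 ≤ n) (t : ℝ) :
    HasDerivAt (fun s : ℝ => max s 0 ^ n) (n * max t 0 ^ (n - 1)) t := by
  have hn₀ : n ≠ 0 := by omega
  have hn₁ : n - 1 ≠ 0 := by omega
  rcases lt_trichotomy t 0 with ht | rfl | ht
  · have hzero : (fun s : ℝ => max s 0 ^ n) =ᶠ[nhds t] fun _ => 0 := by
      filter_upwards [Iio_mem_nhds ht] with s hs
      simp [max_eq_right (Set.mem_Iio.mp hs).le, hn₀]
    simpa [max_eq_right ht.le, hn₁] using (hasDerivAt_const t (0 : ℝ)).congr_of_eventuallyEq hzero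
  · have hO : (fun s : ℝ => max s 0 ^ n) =O[nhds 0] fun s => ‖s - 0‖ ^ n :=
      Asymptotics.isBigO_of_le _ fun s => by
        rw [norm_pow, norm_pow, norm_norm, sub_zero]
        gcongr
        rw [Real.norm_eq_abs, Real.norm_eq_abs, abs_of_nonneg (le_max_right s 0)]
        exact max_le (le_abs_self s) (abs_nonneg s)
    simpa [hn₁] using (hO.hasFDerivAt (𝕜 := ℝ) (by omega)).hasDerivAt
  · have hpow : (fun s : ℝ => max s 0 ^ n) =ᶠ[nhds t] fun s => s ^ n := by
      filter_upwards [Ioi_mem_nhds ht] with s hs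
      rw [max_eq_left (Set.mem_Ioi.mp hs).le]
    simpa [max_eq_left ht.le] using (hasDerivAt_pow n t).congr_of_eventuallyEq hpow

lemma contDiff_one_max_zero_pow {n : ℕ} (hn : 2 ≤ n) :
    ContDiff ℝ 1 fun t : ℝ => max t 0 ^ n := by
  have hderiv : deriv (fun s : ℝ => max s 0 ^ n) = fun t => (n : ℝ) * max t 0 ^ (n - 1) :=
    funext fun t => (hasDerivAt_max_zero_pow hn t).deriv
  rw [contDiff_one_iff_deriv, hderiv]
  exact ⟨fun t => (hasDerivAt_max_zero_pow hn t).differentiableAt, by fun_prop⟩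

section Ridge

variable {α E F : Type*} [NormedAddCommGroup E] [InnerProductSpace ℝ E]
  [NormedAddCommGroup F] [NormedSpace ℝ F]

lemma hasFDerivAt_ridge {g : ℝ → ℝ} {g' : ℝ} {w x : E} {b : ℝ}
    (hg : HasDerivAt g g' (⟪w, x⟫ + b)) (c : F) :
    HasFDerivAt (fun y => g (⟪w, y⟫ + b) • c) (g' • (innerSL ℝ w).smulRight c) x := by
  refine ((hg.comp_hasFDerivAt x ((innerSL ℝ w).hasFDerivAt.add_const b)).smul_const c
    ).congr_fderiv ?_
  ext v
  simp [smul_smul]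

variable {w : α → E} {b : α → ℝ} {B : ℝ}

lemma exists_bound_comp_ridge {f : ℝ → ℝ} (hf : Continuous f) (hw : ∀ θ, ‖w θ‖ ≤ B)
    (hb : ∀ θ, |b θ| ≤ B) (R : ℝ) : ∃ C, ∀ θ x, ‖x‖ ≤ R → ‖f (⟪w θ, x⟫ + b θ)‖ ≤ C := by
  obtain ⟨C, hC⟩ :=
    (isCompact_Icc (a := -(B * R + B)) (b := B * R + B)).exists_bound_of_continuousOn
      hf.continuousOn
  refine ⟨C, fun θ x hx => hC _ (abs_le.mp ?_)⟩
  calc |⟪w θ, x⟫ + b θ| ≤ ‖w θ‖ * ‖x‖ + |b θ| :=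
        (abs_add_le _ _).trans (add_le_add_left (abs_real_inner_le_norm _ _) _)
    _ ≤ B * R + B :=
        add_le_add (mul_le_mul (hw θ) hx (norm_nonneg _) ((norm_nonneg _).trans (hw θ))) (hb θ)

lemma exists_bound_ridgeIntegrand_fderiv {g : ℝ → ℝ} (hg : Continuous (deriv g))
    (hw : ∀ θ, ‖w θ‖ ≤ B) (hb : ∀ θ, |b θ| ≤ B) (c : α → F) (R : ℝ) :
    ∃ C, ∀ θ x, ‖x‖ ≤ R →
      ‖deriv g (⟪w θ, x⟫ + b θ) • (innerSL ℝ (w θ)).smulRight (c θ)‖ ≤ C * ‖c θ‖ := by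
  obtain ⟨C, hC⟩ := exists_bound_comp_ridge hg hw hb R
  refine ⟨C * B, fun θ x hx => ?_⟩
  have hM : ‖(innerSL ℝ (w θ)).smulRight (c θ)‖ ≤ B * ‖c θ‖ := by
    rw [ContinuousLinearMap.norm_smulRight_apply, innerSL_apply_norm]
    exact mul_le_mul_of_nonneg_right (hw θ) (norm_nonneg _)
  calc _ ≤ C * (B * ‖c θ‖) :=
        (norm_smul_le _ _).trans (mul_le_mul (hC θ x hx) hM (norm_nonneg _)
          ((norm_nonneg _).trans (hC θ x hx)))
    _ = C * B * ‖c θ‖ := (mul_assoc _ _ _).symm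

variable [MeasurableSpace α] {μ : Measure α}

noncomputable def ridgeIntegral (μ : Measure α) (g : ℝ → ℝ) (w : α → E) (b : α → ℝ) (c : α → F)
    (x : E) : F :=
  ∫ θ, g (⟪w θ, x⟫ + b θ) • c θ ∂μ

noncomputable def ridgeIntegralFDeriv (μ : Measure α) (g : ℝ → ℝ) (w : α → E) (b : α → ℝ)
    (c : α → F) (x : E) : E →L[ℝ] F :=
  ∫ θ, deriv g (⟪w θ, x⟫ + b θ) • (innerSL ℝ (w θ)).smulRight (c θ) ∂μ

lemma MeasureTheory.AEStronglyMeasurable.comp_ridge {f : ℝ → ℝ} (hf : Continuous f)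
    (hw : AEStronglyMeasurable w μ) (hb : AEStronglyMeasurable b μ) (x : E) :
    AEStronglyMeasurable (fun θ => f (⟪w θ, x⟫ + b θ)) μ :=
  hf.comp_aestronglyMeasurable ((hw.inner aestronglyMeasurable_const).add hb)

lemma MeasureTheory.AEStronglyMeasurable.ridgeIntegrand_fderiv {g : ℝ → ℝ} {c : α → F}
    (hg : Continuous (deriv g)) (hw : AEStronglyMeasurable w μ) (hb : AEStronglyMeasurable b μ)
    (hc : AEStronglyMeasurable c μ) (x : E) :
    AEStronglyMeasurable
      (fun θ => deriv g (⟪w θ, x⟫ + b θ) • (innerSL ℝ (w θ)).smulRight (c θ)) μ :=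
  (hw.comp_ridge hg hb x).smul <| (ContinuousLinearMap.smulRightL ℝ E F).aestronglyMeasurable_comp₂
    ((innerSL ℝ).continuous.comp_aestronglyMeasurable hw) hc

variable {g : ℝ → ℝ} {c : α → F}

lemma integrable_ridgeIntegrand_fderiv (hg : Continuous (deriv g)) (hw : ∀ θ, ‖w θ‖ ≤ B)
    (hb : ∀ θ, |b θ| ≤ B) (hwm : AEStronglyMeasurable w μ) (hbm : AEStronglyMeasurable b μ)
    (hc : Integrable c μ) (x : E) :
    Integrable (fun θ => deriv g (⟪w θ, x⟫ + b θ) • (innerSL ℝ (w θ)).smulRight (c θ)) μ := by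
  obtain ⟨C, hC⟩ := exists_bound_ridgeIntegrand_fderiv hg hw hb c ‖x‖
  exact (hc.norm.const_mul C).mono' (hwm.ridgeIntegrand_fderiv hg hbm hc.1 x)
    (.of_forall fun θ => hC θ x le_rfl)

theorem hasFDerivAt_ridgeIntegral (hg : ContDiff ℝ 1 g) (hw : ∀ θ, ‖w θ‖ ≤ B)
    (hb : ∀ θ, |b θ| ≤ B) (hwm : AEStronglyMeasurable w μ) (hbm : AEStronglyMeasurable b μ)
    (hc : Integrable c μ) (x₀ : E) :
    HasFDerivAt (ridgeIntegral μ g w b c) (ridgeIntegralFDeriv μ g w b c x₀) x₀ := by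
  have hg' := hg.continuous_deriv le_rfl
  obtain ⟨C₀, hC₀⟩ := exists_bound_comp_ridge hg.continuous hw hb ‖x₀‖
  obtain ⟨C, hC⟩ := exists_bound_ridgeIntegrand_fderiv hg' hw hb c (‖x₀‖ + 1)
  refine hasFDerivAt_integral_of_dominated_of_fderiv_le (Metric.ball_mem_nhds x₀ one_pos)
    (.of_forall fun x => (hwm.comp_ridge hg.continuous hbm x).smul hc.1)
    (hc.bdd_smul C₀ (hwm.comp_ridge hg.continuous hbm x₀) (.of_forall fun θ => hC₀ θ x₀ le_rfl))
    (hwm.ridgeIntegrand_fderiv hg' hbm hc.1 x₀) (bound := fun θ => C * ‖c θ‖)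
    (.of_forall fun θ x hx => hC θ x (norm_lt_of_mem_ball hx).le) (hc.norm.const_mul C)
    (.of_forall fun θ x _ =>
      hasFDerivAt_ridge ((hg.differentiable one_ne_zero _).hasDerivAt) (c θ))

theorem continuous_ridgeIntegralFDeriv (hg : ContDiff ℝ 1 g) (hw : ∀ θ, ‖w θ‖ ≤ B)
    (hb : ∀ θ, |b θ| ≤ B) (hwm : AEStronglyMeasurable w μ) (hbm : AEStronglyMeasurable b μ)
    (hc : Integrable c μ) : Continuous (ridgeIntegralFDeriv μ g w b c) := by
  have hg' := hg.continuous_deriv le_rfl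
  refine continuous_iff_continuousAt.mpr fun x₀ => ?_
  obtain ⟨C, hC⟩ := exists_bound_ridgeIntegrand_fderiv hg' hw hb c (‖x₀‖ + 1)
  refine continuousAt_of_dominated (.of_forall fun x => hwm.ridgeIntegrand_fderiv hg' hbm hc.1 x)
    (Filter.eventually_of_mem (Metric.ball_mem_nhds x₀ one_pos) fun x hx =>
      .of_forall fun θ => hC θ x (norm_lt_of_mem_ball hx).le)
    (hc.norm.const_mul C) (.of_forall fun θ => ?_)
  fun_prop

theorem contDiff_ridgeIntegral (hg : ContDiff ℝ 1 g) (hw : ∀ θ, ‖w θ‖ ≤ B)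
    (hb : ∀ θ, |b θ| ≤ B) (hwm : AEStronglyMeasurable w μ) (hbm : AEStronglyMeasurable b μ)
    (hc : Integrable c μ) : ContDiff ℝ 1 (ridgeIntegral μ g w b c) := by
  have hderiv := hasFDerivAt_ridgeIntegral hg hw hb hwm hbm hc
  rw [contDiff_one_iff_fderiv]
  refine ⟨fun x => (hderiv x).differentiableAt, ?_⟩
  simpa only [funext fun x => (hderiv x).fderiv] using
    continuous_ridgeIntegralFDeriv hg hw hb hwm hbm hc

end Ridge

section Divergence

variable {ι α : Type*} [Fintype ι] [DecidableEq ι] [MeasurableSpace α] {μ : Measure α}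

lemma HasFDerivAt.sum_fderiv_apply_single {u : EuclideanSpace ℝ ι → EuclideanSpace ℝ ι}
    {D : EuclideanSpace ℝ ι →L[ℝ] EuclideanSpace ℝ ι} {x : EuclideanSpace ℝ ι}
    (hu : HasFDerivAt u D x) :
    ∑ p, fderiv ℝ (fun y => u y p) x (EuclideanSpace.single p 1) =
      ∑ p, D (EuclideanSpace.single p 1) p := by
  refine Finset.sum_congr rfl fun p _ => ?_
  have hp : HasFDerivAt (fun y => u y p) ((EuclideanSpace.proj p).comp D) x :=
    (EuclideanSpace.proj (𝕜 := ℝ) p).hasFDerivAt.comp x hu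
  rw [hp.fderiv]
  rfl

lemma sum_integral_apply_single_apply
    {f : α → EuclideanSpace ℝ ι →L[ℝ] EuclideanSpace ℝ ι} (hf : Integrable f μ) :
    ∑ p, (∫ θ, f θ ∂μ) (EuclideanSpace.single p 1) p =
      ∫ θ, ∑ p, f θ (EuclideanSpace.single p 1) p ∂μ := by
  let T : (EuclideanSpace ℝ ι →L[ℝ] EuclideanSpace ℝ ι) →L[ℝ] ℝ :=
    ∑ p, (EuclideanSpace.proj p).comp
      (ContinuousLinearMap.apply ℝ (EuclideanSpace ℝ ι) (EuclideanSpace.single p 1))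
  simpa [T] using (T.integral_comp_comm hf).symm

lemma sum_smulRight_innerSL_apply_single_apply (w c : EuclideanSpace ℝ ι) :
    ∑ p, (innerSL ℝ w).smulRight c (EuclideanSpace.single p 1) p = ⟪w, c⟫ := by
  simp [PiLp.inner_apply, mul_comm]

lemma sum_fderiv_ridgeIntegral_apply_single {g : ℝ → ℝ} {w c : α → EuclideanSpace ℝ ι}
    {b : α → ℝ} {B : ℝ} (hg : ContDiff ℝ 1 g) (hw : ∀ θ, ‖w θ‖ ≤ B)
    (hb : ∀ θ, |b θ| ≤ B) (hwm : AEStronglyMeasurable w μ) (hbm : AEStronglyMeasurable b μ)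
    (hc : Integrable c μ) (x : EuclideanSpace ℝ ι) :
    ∑ p, fderiv ℝ (fun y => ridgeIntegral μ g w b c y p) x (EuclideanSpace.single p 1) =
      ∫ θ, deriv g (⟪w θ, x⟫ + b θ) * ⟪w θ, c θ⟫ ∂μ := by
  rw [(hasFDerivAt_ridgeIntegral hg hw hb hwm hbm hc x).sum_fderiv_apply_single,
    ridgeIntegralFDeriv, sum_integral_apply_single_apply
      (integrable_ridgeIntegrand_fderiv (hg.continuous_deriv le_rfl) hw hb hwm hbm hc x)]
  simp_rw [smul_apply, PiLp.smul_apply, smul_eq_mul, ← Finset.mul_sum,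
    sum_smulRight_innerSL_apply_single_apply]

end Divergence

section Coordinates

lemma inner_smul_single_sub_smul_single_self {ι : Type*} [Fintype ι] [DecidableEq ι]
    (w : EuclideanSpace ℝ ι) (i j : ι) :
    ⟪w, w j • EuclideanSpace.single i 1 - w i • EuclideanSpace.single j 1⟫ = 0 := by
  simp only [inner_sub_right, inner_smul_right, EuclideanSpace.inner_single_right]
  simp [mul_comm]

lemma norm_smul_single_sub_smul_single_le {ι : Type*} [Fintype ι] [DecidableEq ι]
    (w : EuclideanSpace ℝ ι) (i j : ι) :
    ‖w j • EuclideanSpace.single i (1 : ℝ) - w i • EuclideanSpace.single j 1‖ ≤ 2 * ‖w‖ := by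
  refine (norm_sub_le _ _).trans ?_
  simp only [norm_smul, PiLp.norm_single, norm_one, mul_one]
  linarith [PiLp.norm_apply_le w i, PiLp.norm_apply_le w j]

variable {d : ℕ}

lemma inner_eq_inner_add_last {v y : EuclideanSpace ℝ (Fin (d + 1))}
    {w x : EuclideanSpace ℝ (Fin d)}
    (hy : ∀ i : Fin (d + 1), y i = if h : (i : ℕ) < d then x ⟨i, h⟩ else 1)
    (hw : ∀ i : Fin d, w i = v (Fin.castSucc i)) :
    ⟪v, y⟫ = ⟪w, x⟫ + v (Fin.last d) := by
  simp [PiLp.inner_apply, Fin.sum_univ_castSucc, hy, hw, mul_comm]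

lemma norm_le_of_apply_eq_castSucc {v : EuclideanSpace ℝ (Fin (d + 1))}
    {w : EuclideanSpace ℝ (Fin d)} (hw : ∀ i, w i = v (Fin.castSucc i)) : ‖w‖ ≤ ‖v‖ := by
  rw [EuclideanSpace.norm_eq, EuclideanSpace.norm_eq, Fin.sum_univ_castSucc]
  simp only [hw]
  exact Real.sqrt_le_sqrt (le_add_of_nonneg_right (by positivity))

lemma continuous_of_apply_eq_castSucc {X : Type*} [TopologicalSpace X]
    {v : X → EuclideanSpace ℝ (Fin (d + 1))} {w : X → EuclideanSpace ℝ (Fin d)}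
    (hv : Continuous v) (hw : ∀ x i, w x i = v x (Fin.castSucc i)) : Continuous w := by
  have : w = fun x => WithLp.toLp 2 fun i => v x (Fin.castSucc i) := by
    funext x; ext i; exact hw x i
  rw [this]
  fun_prop

end Coordinates

theorem sphere_integral_divfree_field_general
    (d k : ℕ) (hk : 3 ≤ k)
    (μ : Measure (Metric.sphere (0 : EuclideanSpace ℝ (Fin (d + 1))) 1))
    (hμ : μ = (volume : Measure (EuclideanSpace ℝ (Fin (d + 1)))).toSphere)
    (ψ : Fin d → Fin d → Metric.sphere (0 : EuclideanSpace ℝ (Fin (d + 1))) 1 → ℝ)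
    (hψ : ∀ i j, i < j → MemLp (ψ i j) 2 μ)
    (xt : EuclideanSpace ℝ (Fin d) → EuclideanSpace ℝ (Fin (d + 1)))
    (hxt : ∀ x, ∀ i : Fin (d + 1), xt x i = if h : (i : ℕ) < d then x ⟨i, h⟩ else 1)
    (wpart : Metric.sphere (0 : EuclideanSpace ℝ (Fin (d + 1))) 1 → EuclideanSpace ℝ (Fin d))
    (hwpart : ∀ θ, ∀ i : Fin d, wpart θ i = θ.1 (Fin.castSucc i))
    (Φ : Metric.sphere (0 : EuclideanSpace ℝ (Fin (d + 1))) 1 → Fin d → Fin d →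
      EuclideanSpace ℝ (Fin d) → EuclideanSpace ℝ (Fin d))
    (hΦ : ∀ θ i j x, Φ θ i j x =
      ((k : ℝ) * max ⟪θ.1, xt x⟫ 0 ^ (k - 1)) •
        (wpart θ j • EuclideanSpace.single i (1 : ℝ) -
          wpart θ i • EuclideanSpace.single j (1 : ℝ)))
    (u : EuclideanSpace ℝ (Fin d) → EuclideanSpace ℝ (Fin d))
    (hu : ∀ x, u x = ∫ θ, ∑ i, ∑ j ∈ univ.filter (fun j => i < j), ψ i j θ • Φ θ i j x ∂μ) :
    ContDiff ℝ 1 u ∧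
      ∀ x, ∑ p, fderiv ℝ (fun y => u y p) x (EuclideanSpace.single p 1) = 0 := by
  have : IsFiniteMeasure μ := hμ ▸ inferInstance
  set c := fun θ => ∑ i, ∑ j ∈ univ.filter (fun j => i < j),
    ψ i j θ • (wpart θ j • EuclideanSpace.single i (1 : ℝ) - wpart θ i • EuclideanSpace.single j 1)
  have hu_eq : u = ridgeIntegral μ (fun t => k * max t 0 ^ (k - 1)) wpart
      (fun θ => θ.1 (Fin.last d)) c := by
    funext x
    simp only [hu, ridgeIntegral, hΦ, inner_eq_inner_add_last (hxt x) (hwpart _), c,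
      Finset.smul_sum, smul_comm (ψ _ _ _)]
  have hg : ContDiff ℝ 1 fun t : ℝ => k * max t 0 ^ (k - 1) :=
    contDiff_const.mul (contDiff_one_max_zero_pow (by omega))
  have hw : ∀ θ, ‖wpart θ‖ ≤ 1 := fun θ =>
    (norm_le_of_apply_eq_castSucc (hwpart θ)).trans_eq (norm_eq_of_mem_sphere θ)
  have hb : ∀ θ : Metric.sphere (0 : EuclideanSpace ℝ (Fin (d + 1))) 1,
      |θ.1 (Fin.last d)| ≤ 1 := fun θ =>
    (PiLp.norm_apply_le θ.1 _).trans_eq (norm_eq_of_mem_sphere θ)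
  have hwm : AEStronglyMeasurable wpart μ :=
    (continuous_of_apply_eq_castSucc continuous_subtype_val hwpart).aestronglyMeasurable
  have hbm : AEStronglyMeasurable (fun θ => θ.1 (Fin.last d)) μ := by fun_prop
  have hc : Integrable c μ :=
    integrable_finsetSum _ fun i _ => integrable_finsetSum _ fun j hj =>
      ((hψ i j (mem_filter.mp hj).2).integrable one_le_two).smul_bdd 2 (by fun_prop)
        (.of_forall fun θ => (norm_smul_single_sub_smul_single_le _ i j).trans
          (by linarith [hw θ]))
  refine ⟨hu_eq ▸ contDiff_ridgeIntegral hg hw hb hwm hbm hc, fun x => ?_⟩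
  rw [hu_eq, sum_fderiv_ridgeIntegral_apply_single hg hw hb hwm hbm hc]
  simp [c, inner_sum, inner_smul_right, inner_smul_single_sub_smul_single_self]

/-- For `k ≥ 3` and densities `ψ_(ij) ∈ L²(S^d)`, the field
`u(x) = ∫_(S^d) ∑_(i<j) Φ_(θ,ij)(x) ψ_(ij)(θ) dθ`, with
`Φ_(θ,ij)(x) = k σ_(k-1)(θ·x̃)(w_j e_i − w_i e_j)`, is `C¹` and divergence-free on `ℝ^d`. -/
theorem sphere_integral_divfree_field
    (d k : ℕ) (hd : 2 ≤ d) (hk : 3 ≤ k)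
    (μ : Measure (Metric.sphere (0 : EuclideanSpace ℝ (Fin (d + 1))) 1))
    (hμ : μ = (volume : Measure (EuclideanSpace ℝ (Fin (d + 1)))).toSphere)
    (ψ : Fin d → Fin d → Metric.sphere (0 : EuclideanSpace ℝ (Fin (d + 1))) 1 → ℝ)
    (hψ : ∀ i j, i < j → MemLp (ψ i j) 2 μ)
    (xt : EuclideanSpace ℝ (Fin d) → EuclideanSpace ℝ (Fin (d + 1)))
    (hxt : ∀ x, ∀ i : Fin (d + 1), xt x i = if h : (i : ℕ) < d then x ⟨i, h⟩ else 1)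
    (wpart : Metric.sphere (0 : EuclideanSpace ℝ (Fin (d + 1))) 1 → EuclideanSpace ℝ (Fin d))
    (hwpart : ∀ θ, ∀ i : Fin d, wpart θ i = θ.1 (Fin.castSucc i))
    (Φ : Metric.sphere (0 : EuclideanSpace ℝ (Fin (d + 1))) 1 → Fin d → Fin d →
      EuclideanSpace ℝ (Fin d) → EuclideanSpace ℝ (Fin d))
    (hΦ : ∀ θ i j x, Φ θ i j x =
      ((k : ℝ) * max ⟪θ.1, xt x⟫ 0 ^ (k - 1)) •
        (wpart θ j • EuclideanSpace.single i (1 : ℝ) -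
          wpart θ i • EuclideanSpace.single j (1 : ℝ)))
    (u : EuclideanSpace ℝ (Fin d) → EuclideanSpace ℝ (Fin d))
    (hu : ∀ x, u x = ∫ θ, ∑ i, ∑ j ∈ univ.filter (fun j => i < j), ψ i j θ • Φ θ i j x ∂μ) :
    ContDiff ℝ 1 u ∧
      ∀ x, ∑ p, fderiv ℝ (fun y => u y p) x (EuclideanSpace.single p 1) = 0 :=
  sphere_integral_divfree_field_general d k hk μ hμ ψ hψ xt hxt wpart hwpart Φ hΦ u hu
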